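/- For a nonnegative tensor T of order k and dimension n, the spectral radius ρ(T) is an eigenvalue of T with a corresponding nonnegative eigenvector, i.e., ρ(T) is an H+-eigenvalue. -/

import Mathlib

open Finset

/-- A `k`-uniform hypergraph on vertex type `V`. -/
structure UHypergraph (V : Type*) (k : ℕ) where
  edges : Finset (Finset V)
  uniform : ∀ e ∈ edges, e.card = k

namespace UHypergraph

variable {V : Type*} {k : ℕ}

/-- The degree of a vertex: the number of edges containing it. -/
def degree [DecidableEq V] (G : UHypergraph V k) (v : V) : ℕ :=
  (G.edges.filter fun e => v ∈ e).card

/-- There is a walk from `a` to `b`. -/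
def HasWalk (G : UHypergraph V k) (a b : V) : Prop :=
  ∃ (l : ℕ) (v : Fin (l + 1) → V) (e : Fin l → Finset V),
    v 0 = a ∧ v (Fin.last l) = b ∧
    ∀ i : Fin l, e i ∈ G.edges ∧ v i.castSucc ∈ e i ∧ v i.succ ∈ e i

/-- `G` is connected: every two vertices are joined by a walk. -/
def Connected (G : UHypergraph V k) : Prop := ∀ a b : V, G.HasWalk a b

/-- A cycle `v_0 e_1 v_1 ⋯ e_l v_0`: pairwise distinct vertices, pairwise
distinct edges, with `{v i, v (i+1)} ⊆ e i` (indices mod `len`). -/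
structure HCycle (G : UHypergraph V k) where
  len : ℕ
  two_le : 2 ≤ len
  vtx : Fin len → V
  edg : Fin len → Finset V
  vtx_inj : Function.Injective vtx
  edg_inj : Function.Injective edg
  edg_mem : ∀ i, edg i ∈ G.edges
  fst_mem : ∀ i, vtx i ∈ edg i
  snd_mem : ∀ i : Fin len, vtx ⟨((i : ℕ) + 1) % len, Nat.mod_lt _ (by omega)⟩ ∈ edg i

/-- `G` contains no cycle. -/
def Acyclic (G : UHypergraph V k) : Prop := IsEmpty (HCycle G)

/-- A hypertree is a connected acyclic hypergraph. -/
def IsHypertree (G : UHypergraph V k) : Prop := G.Connected ∧ G.Acyclic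

/-- `G` is unicyclic: connected with exactly one cycle (any two cycles have
the same vertex set and the same edge set). -/
def IsUnicyclic (G : UHypergraph V k) : Prop :=
  G.Connected ∧ Nonempty (HCycle G) ∧
    ∀ C C' : HCycle G,
      Set.range C.vtx = Set.range C'.vtx ∧ Set.range C.edg = Set.range C'.edg

/-- The girth: the minimum length of a cycle. -/
noncomputable def girth (G : UHypergraph V k) : ℕ := sInf {l | ∃ C : HCycle G, C.len = l}

/-- `G` is linear: any two distinct edges meet in at most one vertex. -/
def Linear [DecidableEq V] (G : UHypergraph V k) : Prop :=
  ∀ e ∈ G.edges, ∀ f ∈ G.edges, e ≠ f → (e ∩ f).card ≤ 1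

/-- Bicyclic: connected with cyclomatic number `m(k-1) - n + 1 = 2`. -/
def IsBicyclic [Fintype V] (G : UHypergraph V k) : Prop :=
  G.Connected ∧ G.edges.card * (k - 1) = Fintype.card V + 1

end UHypergraph

/-- Isomorphism of `k`-uniform hypergraphs. -/
def HIso {V W : Type*} [DecidableEq W] {k : ℕ} (G : UHypergraph V k) (H : UHypergraph W k) : Prop :=
  ∃ φ : V ≃ W, ∀ e : Finset V, e ∈ G.edges ↔ e.image (φ : V → W) ∈ H.edges

section Tensor

variable {V : Type*} {k : ℕ}

/-- Prepend `i` to a `(k-1)`-tuple, obtaining a `k`-tuple. -/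
def tupleCons (i : V) (g : Fin (k - 1) → V) : Fin k → V :=
  fun j => if h : (j : ℕ) = 0 then i else g ⟨(j : ℕ) - 1, by have := j.isLt; omega⟩

/-- `(T x^{k-1})_i = ∑_{i_2,…,i_k} t_{i i_2 … i_k} x_{i_2} ⋯ x_{i_k}`. -/
def tApply [Fintype V] {R : Type*} [CommSemiring R] (T : (Fin k → V) → R) (x : V → R) (i : V) : R :=
  ∑ g : Fin (k - 1) → V, T (tupleCons i g) * ∏ j, x (g j)

/-- `lam ∈ ℂ` is an eigenvalue of the real tensor `T`:
`T x^{k-1} = lam x^{[k-1]}` for some `x ≠ 0`. -/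
def IsEig [Fintype V] (T : (Fin k → V) → ℝ) (lam : ℂ) : Prop :=
  ∃ x : V → ℂ, x ≠ 0 ∧ ∀ i, tApply (fun f => ((T f : ℝ) : ℂ)) x i = lam * x i ^ (k - 1)

/-- The spectral radius of a tensor: the maximum modulus of its eigenvalues. -/
noncomputable def specRad [Fintype V] (T : (Fin k → V) → ℝ) : ℝ :=
  sSup {r : ℝ | ∃ lam : ℂ, IsEig T lam ∧ ‖lam‖ = r}

/-- The arc `i → j` of the digraph `G(T)` associated with a nonnegative tensor. -/
def arcRel (T : (Fin k → V) → ℝ) (i j : V) : Prop :=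
  ∃ g : Fin (k - 1) → V, 0 < T (tupleCons i g) ∧ ∃ l, g l = j

/-- `T` is weakly irreducible: the associated digraph is strongly connected. -/
def WeaklyIrreducible (T : (Fin k → V) → ℝ) : Prop :=
  ∀ a b : V, Relation.ReflTransGen (arcRel T) a b

/-- The adjacency tensor of a `k`-uniform hypergraph: entry `1/(k-1)!` on
tuples of distinct vertices forming an edge, `0` otherwise. -/
noncomputable def adjTensor [Fintype V] [DecidableEq V] (G : UHypergraph V k) : (Fin k → V) → ℝ :=
  fun f => if Function.Injective f ∧ Finset.image f Finset.univ ∈ G.edges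
    then ((Nat.factorial (k - 1) : ℝ))⁻¹ else 0

/-- The spectral radius of a hypergraph. -/
noncomputable def hSpecRad [Fintype V] [DecidableEq V] (G : UHypergraph V k) : ℝ :=
  specRad (adjTensor G)

/-- `x` is a Perron vector of `G`: a positive eigenvector for `ρ(G)`. -/
def IsPerron [Fintype V] [DecidableEq V] (G : UHypergraph V k) (x : V → ℝ) : Prop :=
  (∀ v, 0 < x v) ∧ ∀ i, tApply (adjTensor G) x i = hSpecRad G * x i ^ (k - 1)

end Tensor

section Shapes

variable {V : Type*} {k : ℕ}

/-- A hyperstar: all edges share a common vertex `c`, and pairwise meet exactly in `c`. -/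
def IsHyperstar [DecidableEq V] (G : UHypergraph V k) : Prop :=
  G.Connected ∧ ∃ c : V, (∀ e ∈ G.edges, c ∈ e) ∧
    ∀ e ∈ G.edges, ∀ f ∈ G.edges, e ≠ f → e ∩ f = {c}

/-- `H` is the `k`-th power of the simple graph (2-uniform hypergraph) `B`:
each edge of `B` is enlarged by `k-2` new vertices, all distinct. -/
def IsPowerOf [DecidableEq V] {W : Type*} (H : UHypergraph V k) (B : UHypergraph W 2) : Prop :=
  ∃ (ι : W ↪ V) (ν : ({e // e ∈ B.edges} × Fin (k - 2)) ↪ V),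
    (∀ w p, ι w ≠ ν p) ∧
    (∀ v : V, (∃ w, ι w = v) ∨ (∃ p, ν p = v)) ∧
    H.edges = B.edges.attach.image
      (fun e => e.1.map ι ∪ Finset.image (fun j : Fin (k - 2) => ν (e, j)) Finset.univ)

/-- `H` is a power hypergraph: the `k`-th power of some simple graph. -/
def IsPowerHG [DecidableEq V] (H : UHypergraph V k) : Prop :=
  ∃ (W : Type) (B : UHypergraph W 2), IsPowerOf H B

/-- The shape of `S_{m,g}^k`: a linear unicyclic hypergraph with `m` edges and
girth `g`, whose cycle has length `g`, all non-cycle edges being pendant edges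
at a common cycle vertex `u` (their other vertices having degree one). -/
def IsSmg [DecidableEq V] (g m : ℕ) (G : UHypergraph V k) : Prop :=
  G.IsUnicyclic ∧ G.Linear ∧ G.edges.card = m ∧ G.girth = g ∧
    ∃ (C : UHypergraph.HCycle G) (u : V), C.len = g ∧ (∃ i, C.vtx i = u) ∧
      ∀ f ∈ G.edges, (∃ i, C.edg i = f) ∨
        (u ∈ f ∧ ∀ w ∈ f, w ≠ u → G.degree w = 1)

/-- The shape of `B_m^P`: the `k`-th power of `K_4` minus an edge (two triangles
on `a,b,c` and `a,b,d` sharing base `a b`) with a hyperstar of `m - 5` edges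
attached at the degree-3 vertex `a`. -/
def IsBmP [DecidableEq V] (m : ℕ) (G : UHypergraph V k) : Prop :=
  G.Connected ∧ G.edges.card = m ∧
    ∃ (a b c d : V) (f : Fin 5 → Finset V),
      (a ≠ b ∧ a ≠ c ∧ a ≠ d ∧ b ≠ c ∧ b ≠ d ∧ c ≠ d) ∧
      Function.Injective f ∧ (∀ i, f i ∈ G.edges) ∧
      f 0 ∩ {a, b, c, d} = {a, b} ∧
      f 1 ∩ {a, b, c, d} = {a, c} ∧
      f 2 ∩ {a, b, c, d} = {b, c} ∧
      f 3 ∩ {a, b, c, d} = {a, d} ∧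
      f 4 ∩ {a, b, c, d} = {b, d} ∧
      (∀ i, ∀ w ∈ f i, w ∉ ({a, b, c, d} : Finset V) → G.degree w = 1) ∧
      (∀ e ∈ G.edges, (∀ i, f i ≠ e) → a ∈ e ∧ ∀ w ∈ e, w ≠ a → G.degree w = 1)

/-- The core `G_5`: an edge `e ⊇ {v1,v2,v3}` and three further edges joining
`v1, v2, v3` to a common vertex `w` outside `e`; all vertices of these four
edges other than `w, v1, v2, v3` have degree one. -/
def G5Core [DecidableEq V] (G : UHypergraph V k) (w v1 v2 v3 : V) (e g1 g2 g3 : Finset V) : Prop :=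
  (w ≠ v1 ∧ w ≠ v2 ∧ w ≠ v3 ∧ v1 ≠ v2 ∧ v1 ≠ v3 ∧ v2 ≠ v3) ∧
  (e ∈ G.edges ∧ g1 ∈ G.edges ∧ g2 ∈ G.edges ∧ g3 ∈ G.edges) ∧
  (e ≠ g1 ∧ e ≠ g2 ∧ e ≠ g3 ∧ g1 ≠ g2 ∧ g1 ≠ g3 ∧ g2 ≠ g3) ∧
  e ∩ {w, v1, v2, v3} = {v1, v2, v3} ∧
  g1 ∩ {w, v1, v2, v3} = {w, v1} ∧
  g2 ∩ {w, v1, v2, v3} = {w, v2} ∧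
  g3 ∩ {w, v1, v2, v3} = {w, v3} ∧
  (∀ f ∈ ({e, g1, g2, g3} : Finset (Finset V)), ∀ x ∈ f, x ∉ ({w, v1, v2, v3} : Finset V) →
    G.degree x = 1)

/-- `B_m^L(1)`: `G_5` with a hyperstar of `m-4` edges attached at the degree-3 vertex `w`. -/
def IsBmL1 [DecidableEq V] (m : ℕ) (G : UHypergraph V k) : Prop :=
  G.Connected ∧ G.edges.card = m ∧
    ∃ (w v1 v2 v3 : V) (e g1 g2 g3 : Finset V), G5Core G w v1 v2 v3 e g1 g2 g3 ∧
      ∀ f ∈ G.edges, f ∉ ({e, g1, g2, g3} : Finset (Finset V)) →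
        w ∈ f ∧ ∀ x ∈ f, x ≠ w → G.degree x = 1

/-- `B_m^L(2)`: `G_5` with a hyperstar of `m-4` edges attached at a degree-2 vertex `v1`. -/
def IsBmL2 [DecidableEq V] (m : ℕ) (G : UHypergraph V k) : Prop :=
  G.Connected ∧ G.edges.card = m ∧
    ∃ (w v1 v2 v3 : V) (e g1 g2 g3 : Finset V), G5Core G w v1 v2 v3 e g1 g2 g3 ∧
      ∀ f ∈ G.edges, f ∉ ({e, g1, g2, g3} : Finset (Finset V)) →
        v1 ∈ f ∧ ∀ x ∈ f, x ≠ v1 → G.degree x = 1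

/-- The support (vertex set) of a set of edges. -/
def esupp {V : Type*} [DecidableEq V] (E : Finset (Finset V)) : Finset V := E.sup id

end Shapes

/-!
`ρ(T)` is the largest `s` in the Collatz–Wielandt set of pairs `(s, x)`, `x` in the simplex,
with `s x^{[k-1]} ≤ T x^{k-1}`: for an eigenpair `(μ, y)` the triangle inequality
`|T y^{k-1}| ≤ T |y|^{k-1}` puts `(|μ|, |y|)` in it (after normalisation), so it suffices that the
maximum is attained at an eigenpair. For a positive tensor, `x ↦ T x^{k-1}` is strictly
increasing, so a strict inequality in one coordinate of a maximiser could be spread to all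
coordinates by increasing that coordinate of `x`, contradicting maximality. A nonnegative `T` is
the limit of the positive tensors `T + ε`, whose maximisers all lie in the compact
Collatz–Wielandt set of `T + 1`; a limit point of them is a maximising eigenpair of `T`.
-/

section CollatzWielandt

open Filter Topology

variable {V : Type*} [Fintype V] {k : ℕ}

lemma tApply_nonneg {T : (Fin k → V) → ℝ} (hT : 0 ≤ T) {x : V → ℝ} (hx : 0 ≤ x) (i : V) :
    0 ≤ tApply T x i :=
  sum_nonneg fun _ _ => mul_nonneg (hT _) (prod_nonneg fun _ _ => hx _)

lemma tApply_le_tApply_left {T A : (Fin k → V) → ℝ} (hTA : T ≤ A) {x : V → ℝ} (hx : 0 ≤ x)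
    (i : V) : tApply T x i ≤ tApply A x i :=
  sum_le_sum fun _ _ => mul_le_mul_of_nonneg_right (hTA _) (prod_nonneg fun _ _ => hx _)

lemma tApply_le_tApply_right {T : (Fin k → V) → ℝ} (hT : 0 ≤ T) {x y : V → ℝ} (hx : 0 ≤ x)
    (hxy : x ≤ y) (i : V) : tApply T x i ≤ tApply T y i :=
  sum_le_sum fun _ _ => mul_le_mul_of_nonneg_left
    (prod_le_prod (fun _ _ => hx _) fun _ _ => hxy _) (hT _)

lemma tApply_lt_tApply_right (hk : 2 ≤ k) {A : (Fin k → V) → ℝ} (hA : ∀ f, 0 < A f)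
    {x y : V → ℝ} (hx : 0 ≤ x) (hxy : x ≤ y) {j : V} (hj : x j < y j) (i : V) :
    tApply A x i < tApply A y i := by
  refine sum_lt_sum (fun g _ => mul_le_mul_of_nonneg_left
    (prod_le_prod (fun _ _ => hx _) fun _ _ => hxy _) (hA _).le) ⟨fun _ => j, mem_univ _, ?_⟩
  simp only [prod_const, card_univ, Fintype.card_fin]
  exact mul_lt_mul_of_pos_left (pow_lt_pow_left₀ hj (hx j) (by omega)) (hA _)

lemma tApply_smul (T : (Fin k → V) → ℝ) (c : ℝ) (x : V → ℝ) (i : V) :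
    tApply T (c • x) i = c ^ (k - 1) * tApply T x i := by
  simp only [tApply, mul_sum, Pi.smul_apply, smul_eq_mul, prod_mul_distrib, prod_const,
    card_univ, Fintype.card_fin]
  exact sum_congr rfl fun _ _ => by ring

lemma norm_tApply_ofReal_le {T : (Fin k → V) → ℝ} (hT : 0 ≤ T) (y : V → ℂ) (i : V) :
    ‖tApply (fun f => (T f : ℂ)) y i‖ ≤ tApply T (fun j => ‖y j‖) i := by
  refine (norm_sum_le _ _).trans_eq (sum_congr rfl fun g _ => ?_)
  rw [norm_mul, norm_prod, Complex.norm_real, Real.norm_of_nonneg (hT _)]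

lemma continuous_tApply (i : V) :
    Continuous fun p : ((Fin k → V) → ℝ) × (V → ℝ) => tApply p.1 p.2 i := by
  unfold tApply
  fun_prop

lemma isClosed_setOf_tApply_eq :
    IsClosed {p : ((Fin k → V) → ℝ) × ℝ × (V → ℝ) |
      ∀ i, tApply p.1 p.2.2 i = p.2.1 * p.2.2 i ^ (k - 1)} := by
  simp only [Set.ofPred_forall]
  exact isClosed_iInter fun i => isClosed_eq
    ((continuous_tApply i).comp (continuous_fst.prodMk (continuous_snd.comp continuous_snd)))
    (by fun_prop)

lemma isEig_ofReal {T : (Fin k → V) → ℝ} {s : ℝ} {x : V → ℝ} (hx : x ≠ 0)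
    (h : ∀ i, tApply T x i = s * x i ^ (k - 1)) : IsEig T s := by
  refine ⟨fun i => x i, fun h0 => hx (funext fun i => by simpa using congrFun h0 i), fun i => ?_⟩
  simpa [tApply] using congrArg (fun r : ℝ => (r : ℂ)) (h i)

def collatzWielandtSet (T : (Fin k → V) → ℝ) : Set (ℝ × (V → ℝ)) :=
  {p | 0 ≤ p.1 ∧ 0 ≤ p.2 ∧ ∑ i, p.2 i = 1 ∧ ∀ i, p.1 * p.2 i ^ (k - 1) ≤ tApply T p.2 i}

lemma mk_mem_collatzWielandtSet {T : (Fin k → V) → ℝ} {s : ℝ} {x : V → ℝ} (hs : 0 ≤ s)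
    (hx : 0 ≤ x) (hsum : 0 < ∑ i, x i) (h : ∀ i, s * x i ^ (k - 1) ≤ tApply T x i) :
    (s, (∑ i, x i)⁻¹ • x) ∈ collatzWielandtSet T := by
  refine ⟨hs, smul_nonneg (inv_nonneg.2 hsum.le) hx, ?_, fun i => ?_⟩
  · simp only [Pi.smul_apply, smul_eq_mul, ← mul_sum, inv_mul_cancel₀ hsum.ne']
  · rw [tApply_smul]
    simp only [Pi.smul_apply, smul_eq_mul, mul_pow, mul_left_comm s]
    exact mul_le_mul_of_nonneg_left (h i) (by positivity)

lemma collatzWielandtSet_mono {T A : (Fin k → V) → ℝ} (hTA : T ≤ A) :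
    collatzWielandtSet T ⊆ collatzWielandtSet A :=
  fun _ ⟨hs, hx, hsum, h⟩ => ⟨hs, hx, hsum, fun i => (h i).trans (tApply_le_tApply_left hTA hx i)⟩

lemma collatzWielandtSet_nonempty [Nonempty V] {T : (Fin k → V) → ℝ} (hT : 0 ≤ T) :
    (collatzWielandtSet T).Nonempty :=
  ⟨_, mk_mem_collatzWielandtSet le_rfl (x := 1) zero_le_one (by simp [Fintype.card_pos])
    fun i => by simpa using tApply_nonneg hT zero_le_one i⟩

lemma exists_norm_mem_collatzWielandtSet {T : (Fin k → V) → ℝ} (hT : 0 ≤ T) {μ : ℂ}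
    (hμ : IsEig T μ) : ∃ x, (‖μ‖, x) ∈ collatzWielandtSet T := by
  obtain ⟨y, hy, heig⟩ := hμ
  obtain ⟨j, hj⟩ := Function.ne_iff.1 hy
  refine ⟨_, mk_mem_collatzWielandtSet (norm_nonneg μ) (fun j => norm_nonneg (y j))
    (sum_pos' (fun j _ => norm_nonneg (y j)) ⟨j, mem_univ j, norm_pos_iff.2 hj⟩) fun i => ?_⟩
  calc ‖μ‖ * ‖y i‖ ^ (k - 1) = ‖tApply (fun f => (T f : ℂ)) y i‖ := by
        rw [heig, norm_mul, norm_pow]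
    _ ≤ tApply T (fun j => ‖y j‖) i := norm_tApply_ofReal_le hT y i

lemma exists_le_tApply_one_of_mem_collatzWielandtSet {T : (Fin k → V) → ℝ} (hT : 0 ≤ T)
    {p : ℝ × (V → ℝ)} (hp : p ∈ collatzWielandtSet T) : ∃ i, p.1 ≤ tApply T 1 i := by
  obtain ⟨s, x⟩ := p
  obtain ⟨-, hx, hsum, h⟩ := hp
  have : Nonempty V := by
    by_contra hV
    simp [not_nonempty_iff.1 hV] at hsum
  obtain ⟨i, -, hmax⟩ := exists_max_image univ x univ_nonempty
  have hxi : 0 < x i := by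
    by_contra! hxi
    have : ∑ j, x j ≤ 0 := sum_nonpos fun j _ => (hmax j (mem_univ j)).trans hxi
    linarith
  refine ⟨i, le_of_mul_le_mul_right ?_ (pow_pos hxi (k - 1))⟩
  calc s * x i ^ (k - 1) ≤ tApply T x i := h i
    _ ≤ tApply T (x i • 1) i :=
        tApply_le_tApply_right hT hx (fun j => by simpa using hmax j (mem_univ j)) i
    _ = tApply T 1 i * x i ^ (k - 1) := by rw [tApply_smul, mul_comm]

lemma isCompact_collatzWielandtSet {T : (Fin k → V) → ℝ} (hT : 0 ≤ T) :
    IsCompact (collatzWielandtSet T) := by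
  have hsub : collatzWielandtSet T ⊆ Set.Icc 0 (∑ i, tApply T 1 i, 1) := by
    intro p hp
    obtain ⟨i, hi⟩ := exists_le_tApply_one_of_mem_collatzWielandtSet hT hp
    obtain ⟨hs, hx, hsum, -⟩ := hp
    refine ⟨⟨hs, hx⟩, hi.trans ?_, fun j => ?_⟩
    · exact single_le_sum (fun j _ => tApply_nonneg hT zero_le_one j) (mem_univ i)
    · exact (single_le_sum (fun j _ => hx j) (mem_univ j)).trans_eq hsum
  refine isCompact_Icc.of_isClosed_subset ?_ hsub
  simp only [collatzWielandtSet, Set.ofPred_and, Set.ofPred_forall]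
  refine (isClosed_le continuous_const continuous_fst).inter
    ((isClosed_le continuous_const continuous_snd).inter
    ((isClosed_eq (by fun_prop) continuous_const).inter
    (isClosed_iInter fun i => isClosed_le (by fun_prop)
      ((continuous_tApply i).comp (continuous_const.prodMk continuous_snd)))))

lemma exists_gt_of_eventually_nhds {s : ℝ} {P : ℝ → Prop} (h : ∀ᶠ t in 𝓝 s, P t) :
    ∃ t > s, P t := by
  obtain ⟨t, ht, hts⟩ := ((h.filter_mono nhdsWithin_le_nhds).and self_mem_nhdsWithin).exists
    (f := 𝓝[>] s)
  exact ⟨t, hts, ht⟩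

lemma tApply_eq_of_isMaxOn (hk : 2 ≤ k) {A : (Fin k → V) → ℝ} (hA : ∀ f, 0 < A f)
    {p : ℝ × (V → ℝ)} (hp : p ∈ collatzWielandtSet A)
    (hmax : IsMaxOn Prod.fst (collatzWielandtSet A) p) :
    ∀ i, tApply A p.2 i = p.1 * p.2 i ^ (k - 1) := by
  classical
  obtain ⟨s, x⟩ := p
  obtain ⟨hs, hx, hsum, hle⟩ : 0 ≤ s ∧ 0 ≤ x ∧ ∑ i, x i = 1 ∧ _ := hp
  by_contra! ⟨i₀, hne⟩
  have hlt : s * x i₀ ^ (k - 1) < tApply A x i₀ := (hle i₀).lt_of_ne hne.symm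
  obtain ⟨δ, hδ0, hδ⟩ : ∃ δ > 0, s * (x i₀ + δ) ^ (k - 1) < tApply A x i₀ :=
    exists_gt_of_eventually_nhds <|
      (Continuous.tendsto (by fun_prop) 0).eventually_lt_const (by simpa using hlt)
  set y := x + Pi.single i₀ δ
  have hxy : x ≤ y := le_add_of_nonneg_right (Pi.single_nonneg.2 hδ0.le)
  have hy_lt : ∀ i, tApply A x i < tApply A y i :=
    tApply_lt_tApply_right hk hA hx hxy (j := i₀) (by simpa [y] using hδ0)
  have hy : ∀ i, s * y i ^ (k - 1) < tApply A y i := by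
    intro i
    by_cases hi : i = i₀
    · subst hi
      simpa [y] using hδ.trans (hy_lt i)
    · simpa [y, hi] using (hle i).trans_lt (hy_lt i)
  obtain ⟨t, hst, ht⟩ : ∃ t > s, ∀ i, t * y i ^ (k - 1) < tApply A y i :=
    exists_gt_of_eventually_nhds <| eventually_all.2 fun i =>
      (Continuous.tendsto (by fun_prop) s).eventually_lt_const (hy i)
  have hsum_y : 0 < ∑ i, y i := by
    simp only [y, Pi.add_apply, sum_add_distrib, hsum, sum_pi_single', mem_univ, if_true]
    linarith
  exact hst.not_ge <| hmax <|
    mk_mem_collatzWielandtSet (hs.trans hst.le) (hx.trans hxy) hsum_y fun i => (ht i).le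

lemma exists_isMaxOn_collatzWielandtSet_of_pos [Nonempty V] (hk : 2 ≤ k)
    {A : (Fin k → V) → ℝ} (hA : ∀ f, 0 < A f) :
    ∃ p ∈ collatzWielandtSet A, IsMaxOn Prod.fst (collatzWielandtSet A) p ∧
      ∀ i, tApply A p.2 i = p.1 * p.2 i ^ (k - 1) := by
  obtain ⟨p, hp, hmax⟩ := (isCompact_collatzWielandtSet fun f => (hA f).le).exists_isMaxOn
    (collatzWielandtSet_nonempty fun f => (hA f).le) continuous_fst.continuousOn
  exact ⟨p, hp, hmax, tApply_eq_of_isMaxOn hk hA hp hmax⟩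

lemma exists_isMaxOn_collatzWielandtSet [Nonempty V] (hk : 2 ≤ k)
    {T : (Fin k → V) → ℝ} (hT : 0 ≤ T) :
    ∃ p ∈ collatzWielandtSet T, IsMaxOn Prod.fst (collatzWielandtSet T) p ∧
      ∀ i, tApply T p.2 i = p.1 * p.2 i ^ (k - 1) := by
  set A : ℕ → (Fin k → V) → ℝ := fun m => T + fun _ => 1 / ((m : ℝ) + 1)
  have hA_pos : ∀ m f, 0 < A m f := fun m f =>
    add_pos_of_nonneg_of_pos (hT f) Nat.one_div_pos_of_nat
  have hT_le : ∀ m, T ≤ A m := fun m f => le_add_of_nonneg_right Nat.one_div_pos_of_nat.le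
  have hA_le : ∀ m, A m ≤ T + 1 := fun m f =>
    add_le_add_right (div_le_one_of_le₀ (by simp) (by positivity) : (1 : ℝ) / (m + 1) ≤ 1) (T f)
  have hA_lim : Tendsto A atTop (𝓝 T) := by
    have hε : Tendsto (fun m : ℕ => fun _ : Fin k → V => 1 / ((m : ℝ) + 1)) atTop (𝓝 0) :=
      tendsto_pi_nhds.2 fun _ => tendsto_one_div_add_atTop_nhds_zero_nat
    simpa only [add_zero] using (tendsto_const_nhds (x := T)).add hε
  choose p hp hp_max hp_eig using fun m => exists_isMaxOn_collatzWielandtSet_of_pos hk (hA_pos m)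
  obtain ⟨q, hq, φ, hφ, hq_lim⟩ :=
    (isCompact_collatzWielandtSet (add_nonneg hT zero_le_one)).tendsto_subseq
      fun m => collatzWielandtSet_mono (hA_le m) (hp m)
  have hq_eig : ∀ i, tApply T q.2 i = q.1 * q.2 i ^ (k - 1) :=
    isClosed_setOf_tApply_eq.mem_of_tendsto ((hA_lim.comp hφ.tendsto_atTop).prodMk_nhds hq_lim)
      (Eventually.of_forall fun m => hp_eig (φ m))
  refine ⟨q, ⟨hq.1, hq.2.1, hq.2.2.1, fun i => (hq_eig i).ge⟩, fun r hr => ?_, hq_eig⟩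
  exact ge_of_tendsto ((continuous_fst.tendsto q).comp hq_lim)
    (Eventually.of_forall fun m => hp_max (φ m) (collatzWielandtSet_mono (hT_le (φ m)) hr))

end CollatzWielandt

/-- (Yang–Yang) For a nonnegative tensor `T` of order `k ≥ 2`
and dimension `n ≥ 1`, the spectral radius `ρ(T)` is an `H⁺`-eigenvalue: it is
an eigenvalue admitting a nonzero nonnegative eigenvector. -/
theorem specRad_is_Hplus_eigenvalue {k n : ℕ} (hk : 2 ≤ k) (hn : 1 ≤ n)
    (T : (Fin k → Fin n) → ℝ) (hT : ∀ f, 0 ≤ T f) :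
    ∃ x : Fin n → ℝ, x ≠ 0 ∧ (∀ i, 0 ≤ x i) ∧
      ∀ i, tApply T x i = specRad T * x i ^ (k - 1) := by
  have : Nonempty (Fin n) := ⟨⟨0, hn⟩⟩
  obtain ⟨⟨ρ, x⟩, ⟨hρ, hx, hsum, -⟩, hmax, heig⟩ := exists_isMaxOn_collatzWielandtSet hk hT
  have hx0 : x ≠ 0 := by
    rintro rfl
    simp at hsum
  have hspec : specRad T = ρ := by
    refine IsGreatest.csSup_eq ⟨⟨ρ, isEig_ofReal hx0 heig, by simp [hρ]⟩, ?_⟩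
    rintro _ ⟨μ, hμ, rfl⟩
    obtain ⟨y, hy⟩ := exists_norm_mem_collatzWielandtSet hT hμ
    exact hmax hy
  exact ⟨x, hx0, hx, fun i => hspec ▸ heig i⟩
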